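/- For every positive integer $i$, $\sum_{i_0=0}^{i-1} \binom{i}{i_0}_q \frac{q^{i_0^2}}{\prod_{j=1}^{i_0}(1-q^j)} = \frac{1-q^{i^2}}{\prod_{j=1}^i(1-q^j)}$ as rational functions in $q$. -/
import Mathlib


/-- The indeterminate `q`, viewed in the field of rational functions over `ℚ`. -/
noncomputable def q : RatFunc ℚ := RatFunc.X

/-- The Gaussian (q-)binomial coefficient `(n choose k)_q`. -/
noncomputable def qbinom (n k : ℕ) : RatFunc ℚ :=
  ∏ i ∈ Finset.range k, (1 - q ^ (n - i)) / (1 - q ^ (i + 1))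

lemma one_sub_q_pow_ne_zero {j : ℕ} (hj : 1 ≤ j) : (1 - q ^ j) ≠ 0 := by
  have h : (1 : Polynomial ℚ) - Polynomial.X ^ j ≠ 0 := by
    intro h
    have := congrArg (fun p => Polynomial.coeff p j) h
    simp [Polynomial.coeff_one] at this
    rw [if_neg (by omega : ¬ j = 0)] at this
    norm_num at this
  intro hz
  apply h
  have heq : (algebraMap (Polynomial ℚ) (RatFunc ℚ)) ((1 : Polynomial ℚ) - Polynomial.X ^ j) = 1 - q ^ j := by
    simp [q, RatFunc.algebraMap_X, map_sub, map_pow]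
  apply IsFractionRing.injective (Polynomial ℚ) (RatFunc ℚ)
  rw [heq, hz, map_zero]

noncomputable def P (n : ℕ) : RatFunc ℚ := ∏ j ∈ Finset.Icc 1 n, (1 - q ^ j)

lemma P_zero : P 0 = 1 := by simp [P]

lemma P_succ (n : ℕ) : P (n + 1) = P n * (1 - q ^ (n + 1)) := by
  rw [P, P, Finset.prod_Icc_succ_top (by omega)]

lemma P_ne_zero (n : ℕ) : P n ≠ 0 := by
  apply Finset.prod_ne_zero_iff.mpr
  intro j hj
  exact one_sub_q_pow_ne_zero (Finset.mem_Icc.mp hj).1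

lemma prod_range_denom (k : ℕ) : ∏ j ∈ Finset.range k, (1 - q ^ (j + 1)) = P k := by
  induction k with
  | zero => simp [P_zero]
  | succ k ih => rw [Finset.prod_range_succ, ih, P_succ]

lemma prod_range_numer {n k : ℕ} (h : k ≤ n) :
    ∏ j ∈ Finset.range k, (1 - q ^ (n - j)) = P n / P (n - k) := by
  induction k with
  | zero => simp [div_self (P_ne_zero n)]
  | succ k ih =>
    rw [Finset.prod_range_succ, ih (by omega)]
    have h1 : n - k = (n - (k + 1)) + 1 := by omega
    rw [h1, P_succ]
    have h2 := P_ne_zero (n - (k+1))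
    have h3 := one_sub_q_pow_ne_zero (j := n - (k+1) + 1) (by omega)
    field_simp

lemma qbinom_eq {n k : ℕ} (h : k ≤ n) : qbinom n k = P n / (P k * P (n - k)) := by
  rw [qbinom, Finset.prod_div_distrib, prod_range_denom, prod_range_numer h]
  rw [div_div, mul_comm]

lemma qbinom_zero_of_lt {n k : ℕ} (h : n < k) : qbinom n k = 0 := by
  apply Finset.prod_eq_zero (Finset.mem_range.mpr h)
  simp

lemma qbinom_self (n : ℕ) : qbinom n n = 1 := by
  rw [qbinom_eq le_rfl]
  simp [P_zero, div_self (P_ne_zero n)]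

lemma qbinom_zero (n : ℕ) : qbinom n 0 = 1 := by simp [qbinom]

lemma pascalA {n k : ℕ} (h : k ≤ n) :
    qbinom (n+1) (k+1) = q ^ (k+1) * qbinom n (k+1) + qbinom n k := by
  rcases eq_or_lt_of_le h with rfl | h'
  · rw [qbinom_self, qbinom_zero_of_lt (by omega), qbinom_self]; ring
  · have hk1 : k + 1 ≤ n := h'
    rw [qbinom_eq (by omega : k+1 ≤ n+1), qbinom_eq hk1, qbinom_eq h]
    have e1 : n + 1 - (k+1) = n - k := by omega
    have e2 : n - k = n - (k+1) + 1 := by omega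
    have hq : q ^ (n+1) = q ^ (k+1) * q ^ (n - (k+1) + 1) := by
      rw [← pow_add]; congr 1; omega
    rw [e1, e2, P_succ n, P_succ (n - (k+1)), P_succ k, hq]
    have h1 := P_ne_zero n; have h2 := P_ne_zero k; have h3 := P_ne_zero (n-(k+1))
    have h4 := one_sub_q_pow_ne_zero (j:=k+1) (by omega)
    have h5 := one_sub_q_pow_ne_zero (j:=n-(k+1)+1) (by omega)
    field_simp
    ring

lemma pascalB {n k : ℕ} (h : k ≤ n) :
    qbinom (n+1) (k+1) = qbinom n (k+1) + q ^ (n - k) * qbinom n k := by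
  rcases eq_or_lt_of_le h with rfl | h'
  · rw [qbinom_self, qbinom_zero_of_lt (by omega), qbinom_self]; simp
  · have hk1 : k + 1 ≤ n := h'
    rw [qbinom_eq (by omega : k+1 ≤ n+1), qbinom_eq hk1, qbinom_eq h]
    have e1 : n + 1 - (k+1) = n - k := by omega
    have e2 : n - k = n - (k+1) + 1 := by omega
    have hq : q ^ (n+1) = q ^ (k+1) * q ^ (n - (k+1) + 1) := by
      rw [← pow_add]; congr 1; omega
    rw [e1, e2, P_succ n, P_succ (n - (k+1)), P_succ k, hq]
    have h1 := P_ne_zero n; have h2 := P_ne_zero k; have h3 := P_ne_zero (n-(k+1))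
    have h4 := one_sub_q_pow_ne_zero (j:=k+1) (by omega)
    have h5 := one_sub_q_pow_ne_zero (j:=n-(k+1)+1) (by omega)
    field_simp
    ring

noncomputable def T (n k : ℕ) : RatFunc ℚ := qbinom n k * q ^ (k^2) / P k
noncomputable def F (n : ℕ) : RatFunc ℚ := ∑ k ∈ Finset.range (n+1), T n k

lemma T_zero (n : ℕ) : T n 0 = 1 := by simp [T, qbinom_zero, P_zero]

lemma shift {g : ℕ → RatFunc ℚ} {n : ℕ} (h0 : g 0 = 1) (htop : g (n+1) = 0) :
    1 + ∑ k ∈ Finset.range (n+1), g (k+1) = ∑ k ∈ Finset.range (n+1), g k := by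
  have h1 := Finset.sum_range_succ' g (n+1)
  have h2 := Finset.sum_range_succ g (n+1)
  rw [h2, htop, add_zero, h0] at h1
  rw [h1, add_comm]

lemma F_succ_split (n : ℕ) :
    F (n+1) = (∑ k ∈ Finset.range (n+1), T (n+1) (k+1)) + 1 := by
  rw [F, Finset.sum_range_succ' (fun k => T (n+1) k) (n+1), T_zero]

lemma F_succ_U (n : ℕ) :
    F (n+1) = ∑ k ∈ Finset.range (n+1), qbinom n k * q ^ (k^2+k) / P (k+1) := by
  rw [F_succ_split]
  have hsum : ∀ k ∈ Finset.range (n+1), T (n+1) (k+1) =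
      (qbinom n (k+1) * q ^ ((k+1)^2+(k+1)) / P (k+1))
      + qbinom n k * q ^ ((k+1)^2) / P (k+1) := by
    intro k hk
    rw [Finset.mem_range] at hk
    rw [T, pascalA (by omega : k ≤ n)]
    rw [(by rw [← pow_add]; congr 1; ring : q ^ ((k+1)^2+(k+1)) = q ^ (k+1) * q ^ ((k+1)^2))]
    ring
  rw [Finset.sum_congr rfl hsum, Finset.sum_add_distrib]
  rw [add_comm, ← add_assoc]
  have hg : (1 : RatFunc ℚ) + ∑ k ∈ Finset.range (n+1),
      qbinom n (k+1) * q ^ ((k+1)^2+(k+1)) / P (k+1)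
      = ∑ k ∈ Finset.range (n+1), qbinom n k * q ^ (k^2+k) / P k := by
    apply shift (g := fun m => qbinom n m * q ^ (m^2+m) / P m)
    · simp [qbinom_zero, P_zero]
    · simp [qbinom_zero_of_lt (by omega : n < n+1)]
  rw [hg, ← Finset.sum_add_distrib]
  apply Finset.sum_congr rfl
  intro k hk
  rw [Finset.mem_range] at hk
  rw [P_succ]
  have h2 := P_ne_zero k
  have h4 := one_sub_q_pow_ne_zero (j:=k+1) (by omega)
  rw [(by rw [← pow_add]; congr 1; ring : q ^ ((k+1)^2) = q ^ (k^2+k) * q ^ (k+1))]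
  field_simp
  ring

lemma F_succ_B (n : ℕ) :
    F (n+1) = F n + q ^ (n+1) * ∑ k ∈ Finset.range (n+1), qbinom n k * q ^ (k^2+k) / P (k+1) := by
  rw [F_succ_split]
  have hsum : ∀ k ∈ Finset.range (n+1), T (n+1) (k+1) =
      (qbinom n (k+1) * q ^ ((k+1)^2) / P (k+1))
      + q ^ (n+1) * (qbinom n k * q ^ (k^2+k) / P (k+1)) := by
    intro k hk
    rw [Finset.mem_range] at hk
    rw [T, pascalB (by omega : k ≤ n)]
    have hpow : q ^ (n-k) * q ^ ((k+1)^2) = q ^ (n+1) * q ^ (k^2+k) := by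
      rw [← pow_add, ← pow_add]; congr 1
      have e : (k+1)^2 = k^2 + 2*k + 1 := by ring
      rw [e]; omega
    have key : q ^ (n-k) * qbinom n k * q ^ ((k+1)^2)
        = q ^ (n+1) * (qbinom n k * q ^ (k^2+k)) := by
      linear_combination qbinom n k * hpow
    rw [add_mul, add_div, key]; ring
  rw [Finset.sum_congr rfl hsum, Finset.sum_add_distrib]
  rw [add_comm, ← add_assoc]
  have hg : (1 : RatFunc ℚ) + ∑ k ∈ Finset.range (n+1),
      qbinom n (k+1) * q ^ ((k+1)^2) / P (k+1) = F n := by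
    rw [F]
    apply shift (g := fun m => qbinom n m * q ^ (m^2) / P m)
    · simp [qbinom_zero, P_zero]
    · simp [qbinom_zero_of_lt (by omega : n < n+1)]
  rw [hg, Finset.mul_sum]

lemma F_eq (n : ℕ) : F n = 1 / P n := by
  induction n with
  | zero => simp [F, T_zero, P_zero]
  | succ n ih =>
    have h1 := F_succ_U n
    have h2 := F_succ_B n
    rw [← h1, ih] at h2
    have h4 := one_sub_q_pow_ne_zero (j:=n+1) (by omega)
    have h5 := P_ne_zero n
    rw [P_succ]
    field_simp at h2
    rw [eq_div_iff (mul_ne_zero h5 h4)]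
    linear_combination h2

/-- For every positive integer `i`,
`∑_{i₀=0}^{i-1} (i choose i₀)_q q^(i₀²) / ∏_{j=1}^{i₀}(1-q^j)
  = (1-q^(i²)) / ∏_{j=1}^{i}(1-q^j)` as rational functions in `q`. -/
theorem sum_qbinom_ratio_identity (i : ℕ) (hi : 0 < i) :
    ∑ i0 ∈ Finset.range i,
      qbinom i i0 * q ^ (i0 ^ 2) / ∏ j ∈ Finset.Icc 1 i0, (1 - q ^ j)
    = (1 - q ^ (i ^ 2)) / ∏ j ∈ Finset.Icc 1 i, (1 - q ^ j) := by
  have hF := F_eq i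
  rw [F, Finset.sum_range_succ] at hF
  have hTi : T i i = q ^ (i^2) / P i := by rw [T, qbinom_self, one_mul]
  have hmain : ∑ k ∈ Finset.range i, T i k = 1 / P i - q ^ (i^2) / P i := by
    rw [← hTi]; linear_combination hF
  calc ∑ i0 ∈ Finset.range i,
        qbinom i i0 * q ^ (i0 ^ 2) / ∏ j ∈ Finset.Icc 1 i0, (1 - q ^ j)
      = ∑ k ∈ Finset.range i, T i k := rfl
    _ = (1 - q ^ (i ^ 2)) / P i := by rw [hmain, div_sub_div_same]
    _ = _ := rfl
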